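/- Consider the coupled projected TTSA recursions x_{t+1} = Π_X[x_t + α(A_ff x_t + A_fs y_t − b1 + ε_t)], y_{t+1} = Π_Y[y_t + β(A_sf x_t + A_ss y_t − b2 + ψ_t)] with constant step sizes α, β > 0, x_0 ∈ X, y_0 ∈ Y, on a probability space with filtration (F_t): (x_t, y_t) is F_t-measurable, ε_t and ψ_t are F_{t+1}-measurable with E[ε_t | F_t] = 0, E[ψ_t | F_t] = 0, E[‖ε_t‖² | F_t] ≤ C_ε, E[‖ψ_t‖² | F_t] ≤ C_ψ almost surely. Assume U_Xᵀ A_ff U_X is invertible with c1 := U_X (U_Xᵀ A_ff U_X)^{-1} U_Xᵀ and m_x := σ_min(U_Xᵀ A_ff U_X) > 0, that U_Yᵀ (A_ss − A_sf c1 A_fs) U_Y is invertible with m_y := σ_min(U_Yᵀ (A_ss − A_sf c1 A_fs) U_Y) > 0, and that the iterates are uniformly bounded in L²: sup_t E[‖x_t‖² + ‖y_t‖²] ≤ B < ∞. Let (x_p*, y_p*) ∈ X × Y be the constrained solution. Then there is a constant D ≥ 0, depending only on the matrices, subspaces, step sizes, and B, such that for all T ≥ 1: E[‖ȳ_T − y_p*‖²]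 ≤ (4 C_ψ / m_y² + 4 ‖A_sf‖₂² C_ε / (m_y² m_x²)) / T + D / T², where ȳ_T := (1/T)Σ_{t=0}^{T−1} y_t. -/

import Mathlib

open Matrix MeasureTheory Finset
open scoped BigOperators

noncomputable section
namespace TTSA

abbrev E (n : ℕ) : Type := EuclideanSpace ℝ (Fin n)

def mv {k l : ℕ} (M : Matrix (Fin k) (Fin l) ℝ) (x : E l) : E k :=
  Matrix.toEuclideanLin M x

def specNorm {k l : ℕ} (M : Matrix (Fin k) (Fin l) ℝ) : ℝ :=
  ‖LinearMap.toContinuousLinearMap (Matrix.toEuclideanLin M)‖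

def sigmaMin {k : ℕ} (M : Matrix (Fin k) (Fin k) ℝ) : ℝ :=
  sInf ((fun v : E k => ‖mv M v‖) '' {v | ‖v‖ = 1})

def resolvent {k l : ℕ} (U : Matrix (Fin k) (Fin l) ℝ) (A : Matrix (Fin k) (Fin k) ℝ) :
    Matrix (Fin k) (Fin k) ℝ :=
  U * (Uᵀ * A * U)⁻¹ * Uᵀ

/-!
Summing the projected recursions telescopes. In the coordinates `u = U_Xᵀ ∑ (x_t - x_p*)` and
`v = U_Yᵀ ∑ (y_t - y_p*)` the running sums solve the block system
`F u + G v = α⁻¹ U_Xᵀ (x_T - x_0) - U_Xᵀ ∑ ε_t`, `H u + K v = β⁻¹ U_Yᵀ (y_T - y_0) - U_Yᵀ ∑ ψ_t`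
with `F = U_Xᵀ A_ff U_X`, `G = U_Xᵀ A_fs U_Y`, `H = U_Yᵀ A_sf U_X`, `K = U_Yᵀ A_ss U_Y`,
whose Schur complement `K - H F⁻¹ G` is the matrix defining `m_y`. Eliminating `u` bounds
`T ‖ȳ_T - y_p*‖ = ‖v‖` by the two noise sums and the boundary terms `x_T - x_0`, `y_T - y_0`.
The noise sums are martingales, so their second moments grow linearly in `T`, whereas the boundary
terms stay bounded in `L²` by `B`: this gives the `1/T` and the `1/T²` terms.
-/

open scoped RealInnerProductSpace

lemma sq_le_four_div_sq_mul_of_le {s a b c d N : ℝ} (hs : 0 ≤ s) (h : s ≤ (a + b + c + d) / N) :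
    s ^ 2 ≤ 4 / N ^ 2 * (a ^ 2 + b ^ 2 + c ^ 2 + d ^ 2) := by
  calc s ^ 2 ≤ (a + b + c + d) ^ 2 / N ^ 2 := by rw [← div_pow]; exact pow_le_pow_left₀ hs h 2
    _ ≤ 4 * (a ^ 2 + b ^ 2 + c ^ 2 + d ^ 2) / N ^ 2 := by
        gcongr
        nlinarith [sq_nonneg (a - b), sq_nonneg (a - c), sq_nonneg (a - d), sq_nonneg (b - c),
          sq_nonneg (b - d), sq_nonneg (c - d)]
    _ = 4 / N ^ 2 * (a ^ 2 + b ^ 2 + c ^ 2 + d ^ 2) := by ring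

section LinearAlgebra

variable {k l p : ℕ}

lemma mv_add (M : Matrix (Fin k) (Fin l) ℝ) (a b : E l) : mv M (a + b) = mv M a + mv M b :=
  map_add _ _ _

lemma mv_sub (M : Matrix (Fin k) (Fin l) ℝ) (a b : E l) : mv M (a - b) = mv M a - mv M b :=
  map_sub _ _ _

lemma mv_smul (M : Matrix (Fin k) (Fin l) ℝ) (c : ℝ) (a : E l) : mv M (c • a) = c • mv M a :=
  map_smul _ _ _

lemma mv_sum {ι : Type*} (M : Matrix (Fin k) (Fin l) ℝ) (s : Finset ι) (f : ι → E l) :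
    mv M (∑ i ∈ s, f i) = ∑ i ∈ s, mv M (f i) :=
  map_sum _ _ _

lemma mv_one (v : E k) : mv 1 v = v := by
  simp [mv]

lemma mv_mv (A : Matrix (Fin k) (Fin l) ℝ) (B : Matrix (Fin l) (Fin p) ℝ) (v : E p) :
    mv A (mv B v) = mv (A * B) v := by
  simp [mv, Matrix.toLpLin_apply, Matrix.mulVec_mulVec]

lemma sub_mv (A B : Matrix (Fin k) (Fin l) ℝ) (v : E l) : mv (A - B) v = mv A v - mv B v := by
  simp [mv]

lemma inner_mv (M : Matrix (Fin k) (Fin l) ℝ) (u : E l) (w : E k) :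
    ⟪mv M u, w⟫ = ⟪u, mv Mᵀ w⟫ := by
  rw [mv, mv, ← Matrix.conjTranspose_eq_transpose_of_trivial,
    Matrix.toEuclideanLin_conjTranspose_eq_adjoint, LinearMap.adjoint_inner_right]

lemma norm_mv_le (M : Matrix (Fin k) (Fin l) ℝ) (v : E l) : ‖mv M v‖ ≤ specNorm M * ‖v‖ :=
  (LinearMap.toContinuousLinearMap (Matrix.toEuclideanLin M)).le_opNorm v

lemma specNorm_nonneg (M : Matrix (Fin k) (Fin l) ℝ) : 0 ≤ specNorm M :=
  norm_nonneg _

lemma sigmaMin_mul_norm_le (M : Matrix (Fin k) (Fin k) ℝ) (v : E k) :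
    sigmaMin M * ‖v‖ ≤ ‖mv M v‖ := by
  rcases eq_or_ne v 0 with rfl | hv
  · simp [mv]
  have hv' : 0 < ‖v‖ := norm_pos_iff.2 hv
  have hunit : ‖‖v‖⁻¹ • v‖ = 1 := by
    rw [norm_smul, norm_inv, norm_norm, inv_mul_cancel₀ hv'.ne']
  have hle : sigmaMin M ≤ ‖mv M (‖v‖⁻¹ • v)‖ :=
    csInf_le ⟨0, by rintro _ ⟨w, -, rfl⟩; exact norm_nonneg _⟩ ⟨_, hunit, rfl⟩
  rw [mv_smul, norm_smul, norm_inv, norm_norm] at hle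
  rwa [← le_div_iff₀ hv', div_eq_inv_mul]

lemma norm_le_div_sigmaMin {M : Matrix (Fin k) (Fin k) ℝ} (hM : 0 < sigmaMin M) (v : E k) :
    ‖v‖ ≤ ‖mv M v‖ / sigmaMin M := by
  rw [le_div_iff₀ hM, mul_comm]
  exact sigmaMin_mul_norm_le M v

lemma norm_mv_inv_le {M : Matrix (Fin k) (Fin k) ℝ} (hM : IsUnit M) (hσ : 0 < sigmaMin M)
    (w : E k) : ‖mv M⁻¹ w‖ ≤ ‖w‖ / sigmaMin M := by
  simpa [mv_mv, Matrix.mul_nonsing_inv M ((Matrix.isUnit_iff_isUnit_det M).1 hM), mv_one]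
    using norm_le_div_sigmaMin hσ (mv M⁻¹ w)

lemma mv_schur_complement {A : Matrix (Fin k) (Fin k) ℝ} (hA : IsUnit A)
    (B : Matrix (Fin k) (Fin l) ℝ) (C : Matrix (Fin l) (Fin k) ℝ) (D : Matrix (Fin l) (Fin l) ℝ)
    {u : E k} {v : E l} {p : E k} {q : E l}
    (h₁ : mv A u + mv B v = p) (h₂ : mv C u + mv D v = q) :
    mv (D - C * A⁻¹ * B) v = q - mv (C * A⁻¹) p := by
  rw [← h₁, ← h₂, sub_mv, mv_add, ← mv_mv (C * A⁻¹) B, ← mv_mv C A⁻¹ (mv A u), mv_mv A⁻¹ A,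
    Matrix.nonsing_inv_mul A ((Matrix.isUnit_iff_isUnit_det A).1 hA), mv_one]
  abel

end LinearAlgebra

section Orthonormal

variable {k l p : ℕ} {U : Matrix (Fin k) (Fin l) ℝ}

lemma norm_mv_of_orthonormal (hU : Uᵀ * U = 1) (v : E l) : ‖mv U v‖ = ‖v‖ := by
  have h : ⟪mv U v, mv U v⟫ = ⟪v, v⟫ := by rw [inner_mv, mv_mv, hU, mv_one]
  rwa [real_inner_self_eq_norm_sq, real_inner_self_eq_norm_sq,
    sq_eq_sq₀ (norm_nonneg _) (norm_nonneg _)] at h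

lemma norm_mv_transpose_le (hU : Uᵀ * U = 1) (w : E k) : ‖mv Uᵀ w‖ ≤ ‖w‖ := by
  have h : ‖mv Uᵀ w‖ ^ 2 ≤ ‖w‖ * ‖mv Uᵀ w‖ := by
    calc ‖mv Uᵀ w‖ ^ 2 = ⟪w, mv U (mv Uᵀ w)⟫ := by
          rw [← real_inner_self_eq_norm_sq, real_inner_comm, inner_mv, Matrix.transpose_transpose]
      _ ≤ ‖w‖ * ‖mv Uᵀ w‖ := by
          rw [← norm_mv_of_orthonormal hU (mv Uᵀ w)]; exact real_inner_le_norm _ _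
  nlinarith [norm_nonneg (mv Uᵀ w), norm_nonneg w]

lemma mv_transpose_mv_proj (hU : Uᵀ * U = 1) (w : E k) : mv Uᵀ (mv (U * Uᵀ) w) = mv Uᵀ w := by
  rw [mv_mv, ← Matrix.mul_assoc, hU, Matrix.one_mul]

lemma mv_transpose_eq_zero_of_mv_proj_eq_zero (hU : Uᵀ * U = 1) {w : E k}
    (hw : mv (U * Uᵀ) w = 0) : mv Uᵀ w = 0 := by
  rw [← mv_transpose_mv_proj hU, hw]
  exact map_zero _

lemma mv_mul_mv_transpose_of_mem (hU : Uᵀ * U = 1) (M : Matrix (Fin p) (Fin k) ℝ) {z : E k}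
    (hz : z ∈ Set.range (mv U)) : mv (M * U) (mv Uᵀ z) = mv M z := by
  obtain ⟨w, rfl⟩ := hz
  rw [mv_mv Uᵀ, hU, mv_one, mv_mv]

lemma norm_mv_transpose_of_mem (hU : Uᵀ * U = 1) {z : E k} (hz : z ∈ Set.range (mv U)) :
    ‖mv Uᵀ z‖ = ‖z‖ := by
  obtain ⟨w, rfl⟩ := hz
  rw [mv_mv, hU, mv_one, norm_mv_of_orthonormal hU]

lemma norm_smul_mv_transpose_sub_le (hU : Uᵀ * U = 1) (c : ℝ) (z w : E k) :
    ‖c • mv Uᵀ z - mv Uᵀ w‖ ≤ ‖w‖ + |c| * ‖z‖ := by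
  calc ‖c • mv Uᵀ z - mv Uᵀ w‖ ≤ ‖c • mv Uᵀ z‖ + ‖mv Uᵀ w‖ := norm_sub_le _ _
    _ ≤ |c| * ‖z‖ + ‖w‖ := by
        rw [norm_smul, Real.norm_eq_abs]
        gcongr <;> exact norm_mv_transpose_le hU _
    _ = ‖w‖ + |c| * ‖z‖ := add_comm _ _

lemma sub_mem_range_mv {a b : E k} (ha : a ∈ Set.range (mv U)) (hb : b ∈ Set.range (mv U)) :
    a - b ∈ Set.range (mv U) := by
  obtain ⟨v, rfl⟩ := ha
  obtain ⟨w, rfl⟩ := hb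
  exact ⟨v - w, mv_sub U v w⟩

lemma sum_mem_range_mv {ι : Type*} (s : Finset ι) {f : ι → E k}
    (hf : ∀ i ∈ s, f i ∈ Set.range (mv U)) : ∑ i ∈ s, f i ∈ Set.range (mv U) :=
  (LinearMap.range (Matrix.toEuclideanLin U)).sum_mem hf

end Orthonormal

lemma inv_smul_sum_sub_eq {V : Type*} [AddCommGroup V] [Module ℝ V] {T : ℕ} (hT : T ≠ 0)
    (z : ℕ → V) (a : V) :
    (T : ℝ)⁻¹ • ∑ t ∈ range T, z t - a = (T : ℝ)⁻¹ • ∑ t ∈ range T, (z t - a) := by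
  rw [sum_sub_distrib, sum_const, card_range, smul_sub, ← Nat.cast_smul_eq_nsmul ℝ, smul_smul,
    inv_mul_cancel₀ (Nat.cast_ne_zero.2 hT), one_smul]

section Recursion

variable {k l : ℕ} {U : Matrix (Fin k) (Fin l) ℝ}

lemma mem_range_of_eq_mv_proj {z w : ℕ → E k} (h₀ : z 0 ∈ Set.range (mv U))
    (hz : ∀ t, z (t + 1) = mv (U * Uᵀ) (w t)) (t : ℕ) : z t ∈ Set.range (mv U) := by
  cases t with
  | zero => exact h₀
  | succ t => exact ⟨mv Uᵀ (w t), by rw [hz, mv_mv]⟩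

lemma mv_transpose_sub_eq_smul_sum (hU : Uᵀ * U = 1) {z g : ℕ → E k} {c : ℝ}
    (hz : ∀ t, z (t + 1) = mv (U * Uᵀ) (z t + c • g t)) (T : ℕ) :
    mv Uᵀ (z T - z 0) = c • ∑ t ∈ range T, mv Uᵀ (g t) := by
  rw [← Finset.sum_range_sub, mv_sum, Finset.smul_sum]
  refine Finset.sum_congr rfl fun t _ => ?_
  rw [hz, mv_sub, mv_transpose_mv_proj hU, mv_add, mv_smul, add_sub_cancel_left]

end Recursion

section Coupled

variable {n m d r : ℕ} {UX : Matrix (Fin n) (Fin d) ℝ} {UY : Matrix (Fin m) (Fin r) ℝ}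

lemma mv_transpose_residual {k l : ℕ} {W : Matrix (Fin k) (Fin l) ℝ}
    (hW : Wᵀ * W = 1) (hUX : UXᵀ * UX = 1) (hUY : UYᵀ * UY = 1)
    (P : Matrix (Fin k) (Fin n) ℝ) (Q : Matrix (Fin k) (Fin m) ℝ) {b : E k}
    {x xp : E n} {y yp : E m} (hsol : mv (W * Wᵀ) (mv P xp + mv Q yp - b) = 0)
    (hx : x - xp ∈ Set.range (mv UX)) (hy : y - yp ∈ Set.range (mv UY)) (e : E k) :
    mv Wᵀ (mv P x + mv Q y - b + e) =
      mv (Wᵀ * P * UX) (mv UXᵀ (x - xp)) + mv (Wᵀ * Q * UY) (mv UYᵀ (y - yp)) + mv Wᵀ e := by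
  have hsplit : mv P x + mv Q y - b + e =
      mv P (x - xp) + mv Q (y - yp) + e + (mv P xp + mv Q yp - b) := by
    rw [mv_sub, mv_sub]; abel
  rw [hsplit, mv_add, mv_transpose_eq_zero_of_mv_proj_eq_zero hW hsol, add_zero,
    mv_mul_mv_transpose_of_mem hUX _ hx, mv_mul_mv_transpose_of_mem hUY _ hy, ← mv_mv, ← mv_mv,
    mv_add, mv_add]

lemma transpose_mul_sub_resolvent_mul (Aff : Matrix (Fin n) (Fin n) ℝ)
    (Afs : Matrix (Fin n) (Fin m) ℝ) (Asf : Matrix (Fin m) (Fin n) ℝ)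
    (Ass : Matrix (Fin m) (Fin m) ℝ) :
    UYᵀ * (Ass - Asf * resolvent UX Aff * Afs) * UY =
      UYᵀ * Ass * UY - UYᵀ * Asf * UX * (UXᵀ * Aff * UX)⁻¹ * (UXᵀ * Afs * UY) := by
  simp only [resolvent, Matrix.mul_sub, Matrix.sub_mul, Matrix.mul_assoc]

lemma norm_mv_mul_inv_le (hUX : UXᵀ * UX = 1) (hUY : UYᵀ * UY = 1)
    (A : Matrix (Fin m) (Fin n) ℝ) {F : Matrix (Fin d) (Fin d) ℝ} (hF : IsUnit F)
    (hσ : 0 < sigmaMin F) (w : E d) :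
    ‖mv (UYᵀ * A * UX * F⁻¹) w‖ ≤ specNorm A / sigmaMin F * ‖w‖ := by
  rw [← mv_mv, ← mv_mv, ← mv_mv]
  calc _ ≤ ‖mv A (mv UX (mv F⁻¹ w))‖ := norm_mv_transpose_le hUY _
    _ ≤ specNorm A * ‖mv F⁻¹ w‖ := by
        rw [← norm_mv_of_orthonormal hUX (mv F⁻¹ w)]; exact norm_mv_le _ _
    _ ≤ specNorm A * (‖w‖ / sigmaMin F) := by
        gcongr
        · exact specNorm_nonneg A
        · exact norm_mv_inv_le hF hσ w
    _ = specNorm A / sigmaMin F * ‖w‖ := by ring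

theorem norm_average_sub_le {Aff : Matrix (Fin n) (Fin n) ℝ} {Afs : Matrix (Fin n) (Fin m) ℝ}
    {Asf : Matrix (Fin m) (Fin n) ℝ} {Ass : Matrix (Fin m) (Fin m) ℝ} {b1 : E n} {b2 : E m}
    (hUX : UXᵀ * UX = 1) (hUY : UYᵀ * UY = 1) {α β : ℝ} (hα : α ≠ 0) (hβ : β ≠ 0)
    {x : ℕ → E n} {y : ℕ → E m} {ε : ℕ → E n} {ψ : ℕ → E m}
    (hx0 : x 0 ∈ Set.range (mv UX)) (hy0 : y 0 ∈ Set.range (mv UY))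
    (hrecx : ∀ t, x (t + 1) =
      mv (UX * UXᵀ) (x t + α • (mv Aff (x t) + mv Afs (y t) - b1 + ε t)))
    (hrecy : ∀ t, y (t + 1) =
      mv (UY * UYᵀ) (y t + β • (mv Asf (x t) + mv Ass (y t) - b2 + ψ t)))
    (h1 : IsUnit (UXᵀ * Aff * UX)) (hmx : 0 < sigmaMin (UXᵀ * Aff * UX))
    (hmy : 0 < sigmaMin (UYᵀ * (Ass - Asf * resolvent UX Aff * Afs) * UY))
    {xp : E n} {yp : E m} (hxp : xp ∈ Set.range (mv UX)) (hyp : yp ∈ Set.range (mv UY))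
    (hsolx : mv (UX * UXᵀ) (mv Aff xp + mv Afs yp - b1) = 0)
    (hsoly : mv (UY * UYᵀ) (mv Asf xp + mv Ass yp - b2) = 0) {T : ℕ} (hT : T ≠ 0) :
    ‖(T : ℝ)⁻¹ • ∑ t ∈ range T, y t - yp‖ ≤
      (‖∑ t ∈ range T, ψ t‖ + |β⁻¹| * ‖y T - y 0‖ +
          specNorm Asf / sigmaMin (UXᵀ * Aff * UX) * ‖∑ t ∈ range T, ε t‖ +
          specNorm Asf / sigmaMin (UXᵀ * Aff * UX) * |α⁻¹| * ‖x T - x 0‖) /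
        (T * sigmaMin (UYᵀ * (Ass - Asf * resolvent UX Aff * Afs) * UY)) := by
  have hX t : x t - xp ∈ Set.range (mv UX) :=
    sub_mem_range_mv (mem_range_of_eq_mv_proj hx0 hrecx t) hxp
  have hY t : y t - yp ∈ Set.range (mv UY) :=
    sub_mem_range_mv (mem_range_of_eq_mv_proj hy0 hrecy t) hyp
  set u := ∑ t ∈ range T, mv UXᵀ (x t - xp) with hu
  set v := ∑ t ∈ range T, mv UYᵀ (y t - yp) with hv
  have hfast : mv (UXᵀ * Aff * UX) u + mv (UXᵀ * Afs * UY) v =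
      α⁻¹ • mv UXᵀ (x T - x 0) - mv UXᵀ (∑ t ∈ range T, ε t) := by
    rw [mv_transpose_sub_eq_smul_sum hUX hrecx, inv_smul_smul₀ hα, hu, hv]
    simp only [mv_transpose_residual hUX hUX hUY Aff Afs hsolx (hX _) (hY _), sum_add_distrib,
      mv_sum]
    abel
  have hslow : mv (UYᵀ * Asf * UX) u + mv (UYᵀ * Ass * UY) v =
      β⁻¹ • mv UYᵀ (y T - y 0) - mv UYᵀ (∑ t ∈ range T, ψ t) := by
    rw [mv_transpose_sub_eq_smul_sum hUY hrecy, inv_smul_smul₀ hβ, hu, hv]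
    simp only [mv_transpose_residual hUY hUX hUY Asf Ass hsoly (hX _) (hY _), sum_add_distrib,
      mv_sum]
    abel
  have hschur := mv_schur_complement h1 _ _ _ hfast hslow
  rw [← transpose_mul_sub_resolvent_mul] at hschur
  have hvnorm : ‖∑ t ∈ range T, (y t - yp)‖ = ‖v‖ := by
    rw [hv, ← mv_sum, norm_mv_transpose_of_mem hUY (sum_mem_range_mv _ fun t _ => hY t)]
  rw [inv_smul_sum_sub_eq hT, norm_smul, hvnorm, norm_inv, Real.norm_natCast, mul_comm (T : ℝ),
    ← div_div, inv_mul_eq_div]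
  gcongr
  calc ‖v‖ ≤ ‖mv (UYᵀ * (Ass - Asf * resolvent UX Aff * Afs) * UY) v‖ /
        sigmaMin (UYᵀ * (Ass - Asf * resolvent UX Aff * Afs) * UY) := norm_le_div_sigmaMin hmy v
    _ ≤ _ := by
        rw [add_assoc _ (_ * ‖∑ t ∈ range T, ε t‖), mul_assoc _ |α⁻¹|, ← mul_add]
        gcongr
        rw [hschur]
        refine (norm_sub_le _ _).trans (add_le_add (norm_smul_mv_transpose_sub_le hUY _ _ _) ?_)
        exact (norm_mv_mul_inv_le hUX hUY Asf h1 hmx _).trans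
          (by
            gcongr
            · exact div_nonneg (specNorm_nonneg Asf) hmx.le
            · exact norm_smul_mv_transpose_sub_le hUX _ _ _)

end Coupled

section Probability

variable {Ω F : Type*} {m0 : MeasurableSpace Ω} {μ : Measure Ω}
  [NormedAddCommGroup F] [InnerProductSpace ℝ F]

lemma integral_norm_sq_le_of_integral_add_le {G G' : Type*} [NormedAddCommGroup G]
    [NormedAddCommGroup G'] {f : Ω → G} {g : Ω → G'} (hf : MemLp f 2 μ) (hg : MemLp g 2 μ)
    {B : ℝ} (h : ∫ ω, (‖f ω‖ ^ 2 + ‖g ω‖ ^ 2) ∂μ ≤ B) :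
    ∫ ω, ‖f ω‖ ^ 2 ∂μ ≤ B ∧ ∫ ω, ‖g ω‖ ^ 2 ∂μ ≤ B := by
  have hf2 := hf.norm.integrable_sq
  have hg2 := hg.norm.integrable_sq
  exact ⟨(integral_mono hf2 (hf2.fun_add hg2) fun _ => le_add_of_nonneg_right (sq_nonneg _)).trans h,
    (integral_mono hg2 (hf2.fun_add hg2) fun _ => le_add_of_nonneg_left (sq_nonneg _)).trans h⟩

lemma integral_norm_sub_sq_le {G : Type*} [NormedAddCommGroup G] {f g : Ω → G}
    (hf : MemLp f 2 μ) (hg : MemLp g 2 μ) {B : ℝ} (hfB : ∫ ω, ‖f ω‖ ^ 2 ∂μ ≤ B)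
    (hgB : ∫ ω, ‖g ω‖ ^ 2 ∂μ ≤ B) : ∫ ω, ‖f ω - g ω‖ ^ 2 ∂μ ≤ 4 * B := by
  have hint := (hf.norm.integrable_sq.const_mul 2).fun_add (hg.norm.integrable_sq.const_mul 2)
  calc ∫ ω, ‖f ω - g ω‖ ^ 2 ∂μ ≤ ∫ ω, (2 * ‖f ω‖ ^ 2 + 2 * ‖g ω‖ ^ 2) ∂μ :=
        integral_mono (hf.sub hg).norm.integrable_sq hint fun ω => by
          have := norm_sub_le (f ω) (g ω)
          nlinarith [norm_nonneg (f ω - g ω), sq_nonneg (‖f ω‖ - ‖g ω‖)]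
    _ ≤ 4 * B := by
        rw [integral_add (hf.norm.integrable_sq.const_mul 2) (hg.norm.integrable_sq.const_mul 2),
          integral_const_mul, integral_const_mul]
        linarith

lemma integrable_inner_of_memLp {f g : Ω → F} (hf : MemLp f 2 μ) (hg : MemLp g 2 μ) :
    Integrable (fun ω => ⟪f ω, g ω⟫) μ := by
  refine (hf.norm.integrable_sq.add hg.norm.integrable_sq).mono' (hf.1.inner hg.1)
    (ae_of_all _ fun ω => ?_)
  calc ‖⟪f ω, g ω⟫‖ ≤ ‖f ω‖ * ‖g ω‖ := norm_inner_le_norm _ _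
    _ ≤ ‖f ω‖ ^ 2 + ‖g ω‖ ^ 2 := by nlinarith [norm_nonneg (f ω), norm_nonneg (g ω)]

lemma integral_le_sum_mul_of_le {ι : Type*} (s : Finset ι) {f : Ω → ℝ} {g : ι → Ω → ℝ}
    {c b : ι → ℝ} (hf : ∀ ω, 0 ≤ f ω) (hfg : ∀ ω, f ω ≤ ∑ i ∈ s, c i * g i ω)
    (hg : ∀ i ∈ s, Integrable (g i) μ) (hc : ∀ i ∈ s, 0 ≤ c i)
    (hb : ∀ i ∈ s, ∫ ω, g i ω ∂μ ≤ b i) :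
    ∫ ω, f ω ∂μ ≤ ∑ i ∈ s, c i * b i :=
  calc ∫ ω, f ω ∂μ ≤ ∫ ω, ∑ i ∈ s, c i * g i ω ∂μ :=
        integral_mono_of_nonneg (ae_of_all _ hf)
          (integrable_finsetSum s fun i hi => (hg i hi).const_mul _) (ae_of_all _ hfg)
    _ = ∑ i ∈ s, c i * ∫ ω, g i ω ∂μ := by
        rw [integral_finsetSum s fun i hi => (hg i hi).const_mul _]
        simp_rw [integral_const_mul]
    _ ≤ ∑ i ∈ s, c i * b i := sum_le_sum fun i hi => mul_le_mul_of_nonneg_left (hb i hi) (hc i hi)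

variable [CompleteSpace F] [IsProbabilityMeasure μ]

lemma integral_inner_eq_zero_of_condExp_eq_zero {𝓖 : MeasurableSpace Ω} (h𝓖 : 𝓖 ≤ m0)
    {f g : Ω → F} (hf : StronglyMeasurable[𝓖] f) (hfL2 : MemLp f 2 μ) (hgL2 : MemLp g 2 μ)
    (hg : μ[g|𝓖] =ᵐ[μ] 0) : ∫ ω, ⟪f ω, g ω⟫ ∂μ = 0 := by
  have hpull := condExp_bilin_of_stronglyMeasurable_left (innerSL ℝ) hf
    (integrable_inner_of_memLp hfL2 hgL2) (hgL2.integrable one_le_two)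
  calc ∫ ω, ⟪f ω, g ω⟫ ∂μ = ∫ ω, μ[fun ω => innerSL ℝ (f ω) (g ω)|𝓖] ω ∂μ :=
        (integral_condExp h𝓖).symm
    _ = ∫ _, (0 : ℝ) ∂μ := integral_congr_ae (hpull.trans (hg.mono fun ω hω => by simp [hω]))
    _ = 0 := integral_zero _ _

lemma integral_le_of_condExp_le {𝓖 : MeasurableSpace Ω} (h𝓖 : 𝓖 ≤ m0) {f : Ω → ℝ} {C : ℝ}
    (hf : ∀ᵐ ω ∂μ, μ[f|𝓖] ω ≤ C) : ∫ ω, f ω ∂μ ≤ C := by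
  rw [← integral_condExp h𝓖]
  simpa using integral_mono_ae integrable_condExp (integrable_const C) hf

lemma integral_norm_sq_sum_le (ℱ : Filtration ℕ m0) {g : ℕ → Ω → F} {C : ℝ}
    (hmeas : ∀ t, StronglyMeasurable[ℱ (t + 1)] (g t)) (hL2 : ∀ t, MemLp (g t) 2 μ)
    (hcond : ∀ t, μ[g t|ℱ t] =ᵐ[μ] 0)
    (hvar : ∀ t, ∀ᵐ ω ∂μ, μ[fun ω' => ‖g t ω'‖ ^ 2|ℱ t] ω ≤ C) (T : ℕ) :
    ∫ ω, ‖∑ t ∈ range T, g t ω‖ ^ 2 ∂μ ≤ T * C := by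
  induction T with
  | zero => simp
  | succ T ih =>
    have hSL2 : MemLp (fun ω => ∑ t ∈ range T, g t ω) 2 μ :=
      memLp_finsetSum _ fun t _ => hL2 t
    have hSmeas : StronglyMeasurable[ℱ T] (fun ω => ∑ t ∈ range T, g t ω) :=
      Finset.stronglyMeasurable_fun_sum _ fun t ht => (hmeas t).mono (ℱ.mono (mem_range.1 ht))
    have hcross : ∫ ω, ⟪∑ t ∈ range T, g t ω, g T ω⟫ ∂μ = 0 :=
      integral_inner_eq_zero_of_condExp_eq_zero (ℱ.le T) hSmeas hSL2 (hL2 T) (hcond T)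
    have hsq : ∫ ω, ‖g T ω‖ ^ 2 ∂μ ≤ C := integral_le_of_condExp_le (ℱ.le T) (hvar T)
    have hS := hSL2.norm.integrable_sq
    have hI := (integrable_inner_of_memLp hSL2 (hL2 T)).const_mul 2
    simp_rw [sum_range_succ, norm_add_sq_real]
    rw [integral_add (hS.fun_add hI) (hL2 T).norm.integrable_sq, integral_add hS hI,
      integral_const_mul, hcross]
    push_cast
    linarith

end Probability

theorem slow_statistical_error_bound_general {n m d r : ℕ}
    (Aff : Matrix (Fin n) (Fin n) ℝ) (Afs : Matrix (Fin n) (Fin m) ℝ)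
    (Asf : Matrix (Fin m) (Fin n) ℝ) (Ass : Matrix (Fin m) (Fin m) ℝ)
    (b1 : E n) (b2 : E m)
    (UX : Matrix (Fin n) (Fin d) ℝ) (UY : Matrix (Fin m) (Fin r) ℝ)
    (hUX : UXᵀ * UX = 1) (hUY : UYᵀ * UY = 1)
    {Ω : Type*} {m0 : MeasurableSpace Ω} (μ : Measure Ω)
    [IsProbabilityMeasure μ] (ℱ : Filtration ℕ m0)
    (α β : ℝ) (hα : 0 < α) (hβ : 0 < β)
    (x : ℕ → Ω → E n) (y : ℕ → Ω → E m) (ε : ℕ → Ω → E n) (ψ : ℕ → Ω → E m)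
    (hx0 : ∀ ω, x 0 ω ∈ Set.range (mv UX))
    (hy0 : ∀ ω, y 0 ω ∈ Set.range (mv UY))
    (hrecx : ∀ t : ℕ, ∀ ω, x (t + 1) ω =
      mv (UX * UXᵀ) (x t ω + α • (mv Aff (x t ω) + mv Afs (y t ω) - b1 + ε t ω)))
    (hrecy : ∀ t : ℕ, ∀ ω, y (t + 1) ω =
      mv (UY * UYᵀ) (y t ω + β • (mv Asf (x t ω) + mv Ass (y t ω) - b2 + ψ t ω)))
    (hnoise_meas : ∀ t : ℕ, StronglyMeasurable[ℱ (t + 1)] (ε t) ∧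
      StronglyMeasurable[ℱ (t + 1)] (ψ t))
    (hnoiseL2 : ∀ t : ℕ, MemLp (ε t) 2 μ ∧ MemLp (ψ t) 2 μ)
    (Cε Cψ : ℝ)
    (hmdε : ∀ t : ℕ, μ[ε t | ℱ t] =ᵐ[μ] 0)
    (hmdψ : ∀ t : ℕ, μ[ψ t | ℱ t] =ᵐ[μ] 0)
    (hvarε : ∀ t : ℕ, ∀ᵐ ω ∂μ, (μ[fun ω' => ‖ε t ω'‖ ^ 2 | ℱ t]) ω ≤ Cε)
    (hvarψ : ∀ t : ℕ, ∀ᵐ ω ∂μ, (μ[fun ω' => ‖ψ t ω'‖ ^ 2 | ℱ t]) ω ≤ Cψ)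
    (h1 : IsUnit (UXᵀ * Aff * UX))
    (hmx : 0 < sigmaMin (UXᵀ * Aff * UX))
    (hmy : 0 < sigmaMin (UYᵀ * (Ass - Asf * resolvent UX Aff * Afs) * UY))
    (hiterL2 : ∀ t : ℕ, MemLp (x t) 2 μ ∧ MemLp (y t) 2 μ)
    (B : ℝ) (hB : ∀ t : ℕ, (∫ ω, (‖x t ω‖ ^ 2 + ‖y t ω‖ ^ 2) ∂μ) ≤ B)
    (xp : E n) (yp : E m)
    (hxp : xp ∈ Set.range (mv UX)) (hyp : yp ∈ Set.range (mv UY))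
    (hsolx : mv (UX * UXᵀ) (mv Aff xp + mv Afs yp - b1) = 0)
    (hsoly : mv (UY * UYᵀ) (mv Asf xp + mv Ass yp - b2) = 0) :
    ∃ D : ℝ, 0 ≤ D ∧ ∀ T : ℕ, 1 ≤ T →
      (∫ ω, ‖(T : ℝ)⁻¹ • (∑ t ∈ Finset.range T, y t ω) - yp‖ ^ 2 ∂μ) ≤
        (4 * Cψ / sigmaMin (UYᵀ * (Ass - Asf * resolvent UX Aff * Afs) * UY) ^ 2 +
          4 * specNorm Asf ^ 2 * Cε /
            (sigmaMin (UYᵀ * (Ass - Asf * resolvent UX Aff * Afs) * UY) ^ 2 *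
              sigmaMin (UXᵀ * Aff * UX) ^ 2)) / T +
        D / T ^ 2 := by
  set σx := sigmaMin (UXᵀ * Aff * UX)
  set σy := sigmaMin (UYᵀ * (Ass - Asf * resolvent UX Aff * Afs) * UY)
  set κ := specNorm Asf / σx
  have hxyB t := integral_norm_sq_le_of_integral_add_le (hiterL2 t).1 (hiterL2 t).2 (hB t)
  have hB0 : 0 ≤ B := (integral_nonneg fun ω => sq_nonneg _).trans (hxyB 0).1
  refine ⟨4 / σy ^ 2 * (|β⁻¹| ^ 2 + (κ * |α⁻¹|) ^ 2) * (4 * B), by positivity, fun T hT => ?_⟩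
  set K : ℝ := 4 / (T * σy) ^ 2 with hK
  have hK0 : 0 ≤ K := by positivity
  have hpt ω : ‖(T : ℝ)⁻¹ • (∑ t ∈ range T, y t ω) - yp‖ ^ 2 ≤
      K * ‖∑ t ∈ range T, ψ t ω‖ ^ 2 + K * |β⁻¹| ^ 2 * ‖y T ω - y 0 ω‖ ^ 2 +
        K * κ ^ 2 * ‖∑ t ∈ range T, ε t ω‖ ^ 2 + K * (κ * |α⁻¹|) ^ 2 * ‖x T ω - x 0 ω‖ ^ 2 :=
    (sq_le_four_div_sq_mul_of_le (norm_nonneg _) (norm_average_sub_le hUX hUY hα.ne' hβ.ne'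
      (hx0 ω) (hy0 ω) (fun t => hrecx t ω) (fun t => hrecy t ω) h1 hmx hmy hxp hyp hsolx hsoly
      (by omega))).trans_eq (by ring)
  refine (integral_le_sum_mul_of_le univ (c := ![K, K * |β⁻¹| ^ 2, K * κ ^ 2, K * (κ * |α⁻¹|) ^ 2])
    (g := ![fun ω => ‖∑ t ∈ range T, ψ t ω‖ ^ 2, fun ω => ‖y T ω - y 0 ω‖ ^ 2,
      fun ω => ‖∑ t ∈ range T, ε t ω‖ ^ 2, fun ω => ‖x T ω - x 0 ω‖ ^ 2])
    (b := ![T * Cψ, 4 * B, T * Cε, 4 * B]) (fun ω => sq_nonneg _)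
    (fun ω => by simpa [Fin.sum_univ_four] using hpt ω) ?_ ?_ ?_).trans_eq ?_
  · simp only [mem_univ, forall_const, Fin.forall_fin_succ]
    exact ⟨(memLp_finsetSum _ fun t _ => (hnoiseL2 t).2).norm.integrable_sq,
      ((hiterL2 T).2.sub (hiterL2 0).2).norm.integrable_sq,
      (memLp_finsetSum _ fun t _ => (hnoiseL2 t).1).norm.integrable_sq,
      ((hiterL2 T).1.sub (hiterL2 0).1).norm.integrable_sq, fun i => i.elim0⟩
  · simp only [mem_univ, forall_const, Fin.forall_fin_succ]
    exact ⟨hK0, mul_nonneg hK0 (sq_nonneg _), mul_nonneg hK0 (sq_nonneg _),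
      mul_nonneg hK0 (sq_nonneg _), fun i => i.elim0⟩
  · simp only [mem_univ, forall_const, Fin.forall_fin_succ]
    exact ⟨integral_norm_sq_sum_le ℱ (fun t => (hnoise_meas t).2) (fun t => (hnoiseL2 t).2)
        hmdψ hvarψ T, integral_norm_sub_sq_le (hiterL2 T).2 (hiterL2 0).2 (hxyB T).2 (hxyB 0).2,
      integral_norm_sq_sum_le ℱ (fun t => (hnoise_meas t).1) (fun t => (hnoiseL2 t).1)
        hmdε hvarε T, integral_norm_sub_sq_le (hiterL2 T).1 (hiterL2 0).1 (hxyB T).1 (hxyB 0).1,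
      fun i => i.elim0⟩
  · simp only [Fin.sum_univ_four, Matrix.cons_val, hK, κ, sq_abs]
    field_simp
    ring

/-- statistical error bound for the slow Polyak–Ruppert average:
`E‖ȳ_T - y_p*‖² ≤ (4 C_ψ/m_y² + 4 ‖A_sf‖₂² C_ε/(m_y² m_x²)) / T + D / T²`. -/
theorem slow_statistical_error_bound {n m d r : ℕ}
    (Aff : Matrix (Fin n) (Fin n) ℝ) (Afs : Matrix (Fin n) (Fin m) ℝ)
    (Asf : Matrix (Fin m) (Fin n) ℝ) (Ass : Matrix (Fin m) (Fin m) ℝ)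
    (b1 : E n) (b2 : E m)
    (UX : Matrix (Fin n) (Fin d) ℝ) (UY : Matrix (Fin m) (Fin r) ℝ)
    (hUX : UXᵀ * UX = 1) (hUY : UYᵀ * UY = 1)
    {Ω : Type*} {m0 : MeasurableSpace Ω} (μ : Measure Ω)
    [IsProbabilityMeasure μ] (ℱ : Filtration ℕ m0)
    (α β : ℝ) (hα : 0 < α) (hβ : 0 < β)
    (x : ℕ → Ω → E n) (y : ℕ → Ω → E m) (ε : ℕ → Ω → E n) (ψ : ℕ → Ω → E m)
    (hx0 : ∀ ω, x 0 ω ∈ Set.range (mv UX))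
    (hy0 : ∀ ω, y 0 ω ∈ Set.range (mv UY))
    (hrecx : ∀ t : ℕ, ∀ ω, x (t + 1) ω =
      mv (UX * UXᵀ) (x t ω + α • (mv Aff (x t ω) + mv Afs (y t ω) - b1 + ε t ω)))
    (hrecy : ∀ t : ℕ, ∀ ω, y (t + 1) ω =
      mv (UY * UYᵀ) (y t ω + β • (mv Asf (x t ω) + mv Ass (y t ω) - b2 + ψ t ω)))
    (hadapted : ∀ t : ℕ, StronglyMeasurable[ℱ t] (x t) ∧ StronglyMeasurable[ℱ t] (y t))
    (hnoise_meas : ∀ t : ℕ, StronglyMeasurable[ℱ (t + 1)] (ε t) ∧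
      StronglyMeasurable[ℱ (t + 1)] (ψ t))
    (hnoiseL2 : ∀ t : ℕ, MemLp (ε t) 2 μ ∧ MemLp (ψ t) 2 μ)
    (Cε Cψ : ℝ)
    (hmdε : ∀ t : ℕ, μ[ε t | ℱ t] =ᵐ[μ] 0)
    (hmdψ : ∀ t : ℕ, μ[ψ t | ℱ t] =ᵐ[μ] 0)
    (hvarε : ∀ t : ℕ, ∀ᵐ ω ∂μ, (μ[fun ω' => ‖ε t ω'‖ ^ 2 | ℱ t]) ω ≤ Cε)
    (hvarψ : ∀ t : ℕ, ∀ᵐ ω ∂μ, (μ[fun ω' => ‖ψ t ω'‖ ^ 2 | ℱ t]) ω ≤ Cψ)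
    (h1 : IsUnit (UXᵀ * Aff * UX))
    (hmx : 0 < sigmaMin (UXᵀ * Aff * UX))
    (h2 : IsUnit (UYᵀ * (Ass - Asf * resolvent UX Aff * Afs) * UY))
    (hmy : 0 < sigmaMin (UYᵀ * (Ass - Asf * resolvent UX Aff * Afs) * UY))
    (hiterL2 : ∀ t : ℕ, MemLp (x t) 2 μ ∧ MemLp (y t) 2 μ)
    (B : ℝ) (hB : ∀ t : ℕ, (∫ ω, (‖x t ω‖ ^ 2 + ‖y t ω‖ ^ 2) ∂μ) ≤ B)
    (xp : E n) (yp : E m)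
    (hxp : xp ∈ Set.range (mv UX)) (hyp : yp ∈ Set.range (mv UY))
    (hsolx : mv (UX * UXᵀ) (mv Aff xp + mv Afs yp - b1) = 0)
    (hsoly : mv (UY * UYᵀ) (mv Asf xp + mv Ass yp - b2) = 0) :
    ∃ D : ℝ, 0 ≤ D ∧ ∀ T : ℕ, 1 ≤ T →
      (∫ ω, ‖(T : ℝ)⁻¹ • (∑ t ∈ Finset.range T, y t ω) - yp‖ ^ 2 ∂μ) ≤
        (4 * Cψ / sigmaMin (UYᵀ * (Ass - Asf * resolvent UX Aff * Afs) * UY) ^ 2 +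
          4 * specNorm Asf ^ 2 * Cε /
            (sigmaMin (UYᵀ * (Ass - Asf * resolvent UX Aff * Afs) * UY) ^ 2 *
              sigmaMin (UXᵀ * Aff * UX) ^ 2)) / T +
        D / T ^ 2 :=
  slow_statistical_error_bound_general Aff Afs Asf Ass b1 b2 UX UY hUX hUY μ ℱ α β hα hβ x y ε ψ hx0
    hy0 hrecx hrecy hnoise_meas hnoiseL2 Cε Cψ hmdε hmdψ hvarε hvarψ h1 hmx hmy hiterL2 B hB xp yp
    hxp hyp hsolx hsoly

end TTSA
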